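/- arXiv:2601.13896 — 8 statements merged into one kernel-verified Lean document; each statement's English description precedes it below -/
import Mathlib

section
/- Let V > 0 and let α ∈ (0, π/2). For positive reals W, L, H with W·L·H = V, equality 2·W·H + 2·L·H + (L·W)/cos(α) = 3·(2V)^{2/3}/(cos α)^{1/3} holds if and only if W = L = (2·V·cos α)^{1/3} and H = (V/(4·cos²α))^{1/3}. -/
open Real

lemma cube_of_rpow {x : ℝ} (hx : 0 < x) : (x ^ ((1:ℝ)/3)) ^ 3 = x := by
  rw [← Real.rpow_natCast (x ^ ((1:ℝ)/3)) 3, ← Real.rpow_mul hx.le]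
  norm_num

lemma cube_inj {x y : ℝ} (hx : 0 < x) (hy : 0 < y) (h : x ^ 3 = y ^ 3) : x = y := by
  nlinarith [sq_nonneg (x - y), sq_nonneg (x + y), mul_pos hx hy]

lemma amgm3_eq {a b d : ℝ} (ha : 0 < a) (hb : 0 < b) (hd : 0 < d) :
    a + b + d = 3 * (a * b * d) ^ ((1:ℝ)/3) ↔ a = b ∧ b = d := by
  set x := a ^ ((1:ℝ)/3) with hxdef
  set y := b ^ ((1:ℝ)/3) with hydef
  set z := d ^ ((1:ℝ)/3) with hzdef
  have hx : 0 < x := Real.rpow_pos_of_pos ha _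
  have hy : 0 < y := Real.rpow_pos_of_pos hb _
  have hz : 0 < z := Real.rpow_pos_of_pos hd _
  have hxa : x ^ 3 = a := cube_of_rpow ha
  have hyb : y ^ 3 = b := cube_of_rpow hb
  have hzd : z ^ 3 = d := cube_of_rpow hd
  have hprod : (a * b * d) ^ ((1:ℝ)/3) = x * y * z := by
    rw [Real.mul_rpow (by positivity) hd.le, Real.mul_rpow ha.le hb.le]
  rw [hprod, ← hxa, ← hyb, ← hzd]
  constructor
  · intro h
    have hsum : (0:ℝ) < x + y + z := by linarith
    have hzero : (x + y + z) * ((x - y)^2 + (y - z)^2 + (x - z)^2) = 0 := by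
      linear_combination 2 * h
    have hs : (x - y)^2 + (y - z)^2 + (x - z)^2 = 0 := by
      rcases mul_eq_zero.mp hzero with h' | h'
      · linarith
      · exact h'
    have h1 : x = y := by nlinarith [sq_nonneg (x - y), sq_nonneg (y - z), sq_nonneg (x - z)]
    have h2 : y = z := by nlinarith [sq_nonneg (x - y), sq_nonneg (y - z), sq_nonneg (x - z)]
    exact ⟨by rw [h1], by rw [h2]⟩
  · rintro ⟨h1, h2⟩
    have hxy : x = y := cube_inj hx hy h1
    have hyz : y = z := cube_inj hy hz h2
    rw [hxy, hyz]; ring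

/-- For a hip roof house of volume `V = W*L*H` with roof slope angle
`α ∈ (0, π/2)`, equality `2WH + 2LH + LW / cos α = 3 (2V)^{2/3} / (cos α)^{1/3}` holds
if and only if `W = L = (2 V cos α)^{1/3}` and `H = (V / (4 cos² α))^{1/3}`. -/
theorem hip_roof_surface_equality_iff
    (V α : ℝ) (hV : 0 < V) (hα : α ∈ Set.Ioo 0 (π / 2))
    (W L H : ℝ) (hW : 0 < W) (hL : 0 < L) (hH : 0 < H)
    (hvol : W * L * H = V) :
    2 * W * H + 2 * L * H + L * W / Real.cos α =
      3 * (2 * V) ^ ((2 : ℝ) / 3) / (Real.cos α) ^ ((1 : ℝ) / 3) ↔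
    W = (2 * V * Real.cos α) ^ ((1 : ℝ) / 3) ∧
    L = (2 * V * Real.cos α) ^ ((1 : ℝ) / 3) ∧
    H = (V / (4 * (Real.cos α) ^ 2)) ^ ((1 : ℝ) / 3) := by
  obtain ⟨hα0, hα1⟩ := hα
  have hc : 0 < Real.cos α := Real.cos_pos_of_mem_Ioo ⟨by linarith [Real.pi_pos], hα1⟩
  set c := Real.cos α with hcdef
  have ha : 0 < 2 * W * H := by positivity
  have hb : 0 < 2 * L * H := by positivity
  have hd : 0 < L * W / c := by positivity
  have hK : (0:ℝ) < 2 * V * c := by positivity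
  have hM : (0:ℝ) < V / (4 * c ^ 2) := by positivity
  have hKcube : ((2 * V * c) ^ ((1:ℝ)/3)) ^ 3 = 2 * V * c := cube_of_rpow hK
  have hMcube : ((V / (4 * c ^ 2)) ^ ((1:ℝ)/3)) ^ 3 = V / (4 * c ^ 2) := cube_of_rpow hM
  have hKpos : 0 < (2 * V * c) ^ ((1:ℝ)/3) := Real.rpow_pos_of_pos hK _
  have hMpos : 0 < (V / (4 * c ^ 2)) ^ ((1:ℝ)/3) := Real.rpow_pos_of_pos hM _
  have hrhs : 3 * (2 * V) ^ ((2:ℝ)/3) / c ^ ((1:ℝ)/3)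
      = 3 * ((2 * W * H) * (2 * L * H) * (L * W / c)) ^ ((1:ℝ)/3) := by
    have h1 : (2 * W * H) * (2 * L * H) * (L * W / c) = (2 * V) ^ 2 / c := by
      field_simp
      nlinarith [hvol]
    rw [h1, Real.div_rpow (by positivity) hc.le, ← Real.rpow_natCast (2 * V) 2,
      ← Real.rpow_mul (by positivity : (0:ℝ) ≤ 2 * V)]
    norm_num
    ring
  rw [hrhs, amgm3_eq ha hb hd]
  constructor
  · rintro ⟨h1, h2⟩
    have hWL : W = L := by
      have h := mul_right_cancel₀ hH.ne' (show (2 * W) * H = (2 * L) * H by linarith)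
      linarith
    rw [eq_div_iff hc.ne'] at h2
    have hHW : 2 * c * H = W :=
      mul_left_cancel₀ hL.ne' (show L * (2 * c * H) = L * W by linear_combination h2)
    have hvol' : W * W * H = V := by linear_combination hvol + W * H * hWL
    have hWc : W ^ 3 = 2 * V * c := by
      linear_combination 2 * c * hvol' - W ^ 2 * hHW
    have hW' : W = (2 * V * c) ^ ((1:ℝ)/3) := cube_inj hW hKpos (by rw [hWc, hKcube])
    refine ⟨hW', hWL ▸ hW', ?_⟩
    have h8 : (2 * c * H) ^ 3 = 2 * V * c := by rw [hHW, hWc]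
    have hHc : H ^ 3 = V / (4 * c ^ 2) := by
      rw [eq_div_iff (by positivity)]
      exact mul_left_cancel₀ (show (2 * c) ≠ 0 by positivity)
        (show (2 * c) * (H ^ 3 * (4 * c ^ 2)) = (2 * c) * V by linear_combination h8)
    exact cube_inj hH hMpos (by rw [hHc, hMcube])
  · rintro ⟨hW', hL', hH'⟩
    have hWL : W = L := by rw [hW', hL']
    have hHW : 2 * c * H = W := by
      apply cube_inj (by positivity) hW
      rw [hW', hH', hKcube]
      have he : (2 * c * (V / (4 * c ^ 2)) ^ ((1:ℝ)/3)) ^ 3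
          = 8 * c ^ 3 * ((V / (4 * c ^ 2)) ^ ((1:ℝ)/3)) ^ 3 := by ring
      rw [he, hMcube]
      field_simp
      ring
    constructor
    · rw [hWL]
    · rw [← hWL, ← hHW]
      field_simp
end

section
/- Let α ∈ (0, π/2). For all r > 0 and k > 0, (cos α)^{1/3}·(2k + 2·r·k + r/cos α) ≥ 3·(2·r·k)^{2/3}, with equality if and only if r = 1 and k = 1/(2·cos α). Equivalently, the dimensionless compactness measure S/S_min of any hip roof house is at least 1, with equality exactly at the optimal proportions. -/
open Real

lemma amgm3 (a b c : ℝ) (ha : 0 < a) (hb : 0 < b) (hc : 0 < c) :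
    3 * (a * b * c) ^ ((1:ℝ)/3) ≤ a + b + c ∧
    (a + b + c = 3 * (a * b * c) ^ ((1:ℝ)/3) ↔ a = b ∧ b = c) := by
  set x := a ^ ((1:ℝ)/3) with hxdef
  set y := b ^ ((1:ℝ)/3) with hydef
  set z := c ^ ((1:ℝ)/3) with hzdef
  have hx : 0 < x := Real.rpow_pos_of_pos ha _
  have hy : 0 < y := Real.rpow_pos_of_pos hb _
  have hz : 0 < z := Real.rpow_pos_of_pos hc _
  have hxa : x ^ 3 = a := by
    rw [hxdef, ← Real.rpow_natCast (a ^ ((1:ℝ)/3)) 3, ← Real.rpow_mul ha.le]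
    norm_num
  have hyb : y ^ 3 = b := by
    rw [hydef, ← Real.rpow_natCast (b ^ ((1:ℝ)/3)) 3, ← Real.rpow_mul hb.le]
    norm_num
  have hzc : z ^ 3 = c := by
    rw [hzdef, ← Real.rpow_natCast (c ^ ((1:ℝ)/3)) 3, ← Real.rpow_mul hc.le]
    norm_num
  have hmul : (a * b * c) ^ ((1:ℝ)/3) = x * y * z := by
    rw [Real.mul_rpow (by positivity) hc.le, Real.mul_rpow ha.le hb.le]
  constructor
  · rw [hmul, ← hxa, ← hyb, ← hzc]
    nlinarith [sq_nonneg (x - y), sq_nonneg (y - z), sq_nonneg (x - z),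
      mul_pos hx hy, mul_pos hy hz, mul_pos hx hz, hx.le, hy.le, hz.le,
      mul_nonneg (mul_nonneg hx.le hy.le) hz.le]
  · constructor
    · intro h
      rw [hmul, ← hxa, ← hyb, ← hzc] at h
      have key : (x + y + z) * ((x - y)^2 + (y - z)^2 + (x - z)^2) = 0 := by
        linear_combination 2 * h
      have hQ : (x - y)^2 + (y - z)^2 + (x - z)^2 = 0 := by
        rcases mul_eq_zero.mp key with h0 | h0
        · exfalso; nlinarith
        · exact h0
      have hxy : x = y := by nlinarith [sq_nonneg (x - y), sq_nonneg (y - z), sq_nonneg (x - z)]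
      have hyz : y = z := by nlinarith [sq_nonneg (x - y), sq_nonneg (y - z), sq_nonneg (x - z)]
      exact ⟨by rw [← hxa, ← hyb, hxy], by rw [← hyb, ← hzc, hyz]⟩
    · rintro ⟨h1, h2⟩
      subst h1; subst h2
      have : x = y := by rw [hxdef, hydef]
      have hyz : y = z := by rw [hydef, hzdef]
      rw [hmul]
      simp only [this, hyz, ← hzc]
      ring

/-- For `α ∈ (0, π/2)` and all `r, k > 0`,
`(cos α)^{1/3} (2k + 2rk + r / cos α) ≥ 3 (2 r k)^{2/3}`, with equality iff
`r = 1` and `k = 1/(2 cos α)`.  Equivalently, the compactness measure `S/S_min`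
of any hip roof house is at least 1, with equality exactly at the optimum. -/
theorem hip_roof_compactness_measure
    (α : ℝ) (hα : α ∈ Set.Ioo 0 (π / 2)) (r k : ℝ) (hr : 0 < r) (hk : 0 < k) :
    (Real.cos α) ^ ((1 : ℝ) / 3) * (2 * k + 2 * r * k + r / Real.cos α) ≥
      3 * (2 * r * k) ^ ((2 : ℝ) / 3) ∧
    ((Real.cos α) ^ ((1 : ℝ) / 3) * (2 * k + 2 * r * k + r / Real.cos α) =
        3 * (2 * r * k) ^ ((2 : ℝ) / 3) ↔
      r = 1 ∧ k = 1 / (2 * Real.cos α)) := by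
  obtain ⟨hα0, hα1⟩ := hα
  have hC : 0 < Real.cos α := Real.cos_pos_of_mem_Ioo ⟨by linarith [Real.pi_pos], hα1⟩
  set C := Real.cos α with hCdef
  have ha : (0:ℝ) < 2 * k := by linarith
  have hb : (0:ℝ) < 2 * r * k := by positivity
  have hc : (0:ℝ) < r / C := by positivity
  obtain ⟨hle, heq⟩ := amgm3 (2 * k) (2 * r * k) (r / C) ha hb hc
  have hC3 : 0 < C ^ ((1:ℝ)/3) := Real.rpow_pos_of_pos hC _
  -- key identity: 3 * (2rk)^{2/3} = C^{1/3} * (3 * (abc)^{1/3})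
  have hprod : C * (2 * k * (2 * r * k) * (r / C)) = (2 * r * k) ^ (2:ℕ) := by
    field_simp
  have hkey : (3:ℝ) * (2 * r * k) ^ ((2:ℝ)/3) =
      C ^ ((1:ℝ)/3) * (3 * (2 * k * (2 * r * k) * (r / C)) ^ ((1:ℝ)/3)) := by
    have h1 : (2 * r * k) ^ ((2:ℝ)/3) = ((2 * r * k) ^ (2:ℕ)) ^ ((1:ℝ)/3) := by
      rw [← Real.rpow_natCast (2 * r * k) 2, ← Real.rpow_mul hb.le]
      norm_num
    rw [h1, ← hprod, Real.mul_rpow hC.le (by positivity)]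
    ring
  constructor
  · rw [ge_iff_le, hkey]
    have := mul_le_mul_of_nonneg_left hle hC3.le
    linarith [this]
  · rw [hkey]
    constructor
    · intro h
      have h' : 2 * k + 2 * r * k + r / C = 3 * (2 * k * (2 * r * k) * (r / C)) ^ ((1:ℝ)/3) := by
        have := mul_left_cancel₀ (ne_of_gt hC3) h
        linarith [this]
      obtain ⟨e1, e2⟩ := heq.mp h'
      have hr1 : r = 1 := by
        have : 2 * k * 1 = 2 * k * r := by linarith
        have := mul_left_cancel₀ (by positivity : (2:ℝ) * k ≠ 0) this
        linarith
      refine ⟨hr1, ?_⟩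
      rw [hr1] at e2
      field_simp at e2 ⊢
      linarith
    · rintro ⟨hr1, hk1⟩
      have h' : 2 * k = 2 * r * k ∧ 2 * r * k = r / C := by
        subst hr1
        constructor
        · ring
        · rw [hk1]; field_simp
      rw [heq.mpr h']
end

section
/- Let α ∈ (0, π/2) and define γ(r,k) = (2k + 2·r·k + r/cos α)/(r·k)^{2/3} on (0,∞)². Then (r, k) = (1, 1/(2·cos α)) is the unique point in (0,∞)² at which both partial derivatives ∂γ/∂r and ∂γ/∂k vanish. -/
open Real

/-!
Both partial derivatives of `γ` have the shape `d/dx [(u + v x) / (a x)^p]`, which vanishes at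
`x > 0` exactly when `(1 - p) v x = p u`. With `p = 2/3` the two critical-point equations become
`(2k + 1/cos α) r = 4k` and `(1 + r) k = r / cos α`; writing `t = k cos α`, their sum gives
`3tr = 3t`, so `r = 1` and then `t = 1/2`.
-/

/-- The normalized surface function `γ(r,k) = (2k + 2rk + r/cos α) / (rk)^{2/3}`. -/
noncomputable def hipGamma (α r k : ℝ) : ℝ :=
  (2 * k + 2 * r * k + r / Real.cos α) / (r * k) ^ ((2 : ℝ) / 3)

theorem hasDerivAt_affine_div_rpow {a u v p x : ℝ} (ha : 0 < a) (hx : 0 < x) :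
    HasDerivAt (fun y => (u + v * y) / (a * y) ^ p)
      (((1 - p) * v * x - p * u) / (x * (a * x) ^ p)) x := by
  have hax : 0 < a * x := mul_pos ha hx
  have hpow : (a * x) ^ p ≠ 0 := (rpow_pos_of_pos hax p).ne'
  have hnum : HasDerivAt (fun y => u + v * y) v x := by
    simpa using ((hasDerivAt_id x).const_mul v).const_add u
  have hden : HasDerivAt (fun y => (a * y) ^ p) (a * p * (a * x) ^ (p - 1)) x := by
    simpa using ((hasDerivAt_id x).const_mul a).rpow_const (p := p) (Or.inl hax.ne')
  refine (hnum.div hden hpow).congr_deriv ?_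
  rw [rpow_sub_one hax.ne']
  field_simp
  ring

theorem deriv_affine_div_rpow_eq_zero_iff {a u v p x : ℝ} (ha : 0 < a) (hx : 0 < x) :
    deriv (fun y => (u + v * y) / (a * y) ^ p) x = 0 ↔ (1 - p) * v * x = p * u := by
  have hden : x * (a * x) ^ p ≠ 0 := (mul_pos hx (rpow_pos_of_pos (mul_pos ha hx) p)).ne'
  rw [(hasDerivAt_affine_div_rpow ha hx).deriv, div_eq_zero_iff, or_iff_left hden, sub_eq_zero]

theorem hip_critical_equations_iff {c r k : ℝ} (hc : c ≠ 0) (hr : r ≠ 0) :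
    ((2 * k + 1 / c) * r = 4 * k ∧ (1 + r) * k = r / c) ↔ r = 1 ∧ k = 1 / (2 * c) := by
  field_simp
  constructor
  · rintro ⟨hfst, hsnd⟩
    have hkc : k * c ≠ 0 := by
      rintro h
      exact hr (by linear_combination (1 + r) * h - hsnd)
    have hr1 : r = 1 := mul_left_cancel₀ hkc (by linear_combination (hfst + hsnd) / 3)
    subst hr1
    exact ⟨rfl, by linear_combination hsnd⟩
  · rintro ⟨rfl, hk⟩
    exact ⟨by linear_combination -hk, by linear_combination hk⟩

/-- For `α ∈ (0, π/2)`, the point `(1, 1/(2 cos α))` is the unique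
point of `(0,∞)²` at which both partial derivatives of `γ` vanish. -/
theorem hip_roof_unique_critical_point
    (α : ℝ) (hα : α ∈ Set.Ioo 0 (π / 2)) :
    ∀ r k : ℝ, 0 < r → 0 < k →
      ((deriv (fun r' => hipGamma α r' k) r = 0 ∧
        deriv (fun k' => hipGamma α r k') k = 0) ↔
        (r = 1 ∧ k = 1 / (2 * Real.cos α))) := by
  intro r k hr hk
  have hc : cos α ≠ 0 := (cos_pos_of_mem_Ioo ⟨by linarith [hα.1, pi_pos], hα.2⟩).ne'
  have hγr : (fun r' => hipGamma α r' k) =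
      fun r' => (2 * k + (2 * k + 1 / cos α) * r') / (k * r') ^ ((2 : ℝ) / 3) := by
    funext r'
    rw [hipGamma, mul_comm r' k]
    ring
  have hγk : (fun k' => hipGamma α r k') =
      fun k' => (r / cos α + (2 + 2 * r) * k') / (r * k') ^ ((2 : ℝ) / 3) := by
    funext k'
    rw [hipGamma]
    ring
  rw [hγr, hγk, deriv_affine_div_rpow_eq_zero_iff hk hr, deriv_affine_div_rpow_eq_zero_iff hr hk,
    ← hip_critical_equations_iff hc hr.ne']
  constructor <;> rintro ⟨hfst, hsnd⟩ <;> constructor <;> linarith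
end

section
/- Let α ∈ (0, π/2) and V > 0. The function r ↦ 3·r·V^{2/3} / ( cos α · ( r²/(cos α·(r+1)) )^{2/3} ), giving the minimal external surface of a hip roof house of volume V with fixed footprint aspect ratio r, attains its minimum on (0,∞) at r = 1. -/
open Real

/-- For `α ∈ (0, π/2)` and `V > 0`, the minimal external surface
`S_min(r) = 3 r V^{2/3} / (cos α · (r²/(cos α (r+1)))^{2/3})` of a hip roof house of
volume `V` with fixed footprint aspect ratio `r` attains its minimum on `(0,∞)` at
`r = 1`. -/
theorem hip_roof_Smin_fixed_r_min_at_one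
    (α V : ℝ) (hα : α ∈ Set.Ioo 0 (π / 2)) (hV : 0 < V) :
    ∀ r : ℝ, 0 < r →
      3 * r * V ^ ((2 : ℝ) / 3) /
          (Real.cos α * (r ^ 2 / (Real.cos α * (r + 1))) ^ ((2 : ℝ) / 3)) ≥
        3 * 1 * V ^ ((2 : ℝ) / 3) /
          (Real.cos α * ((1 : ℝ) ^ 2 / (Real.cos α * (1 + 1))) ^ ((2 : ℝ) / 3)) := by
  intro r hr
  have hc : 0 < Real.cos α := Real.cos_pos_of_mem_Ioo ⟨by linarith [hα.1, Real.pi_pos], hα.2⟩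
  set c := Real.cos α with hcdef
  have hr1 : 0 < r + 1 := by linarith
  have hb1 : (0:ℝ) < r ^ 2 / (c * (r + 1)) := by positivity
  have hb2 : (0:ℝ) < (1:ℝ) ^ 2 / (c * (1 + 1)) := by positivity
  have hV23 : (0:ℝ) < V ^ ((2:ℝ)/3) := by positivity
  rw [ge_iff_le, div_le_div_iff₀ (by positivity) (by positivity)]
  -- goal : 3*1*V^(2/3) * (c * (r^2/(c*(r+1)))^(2/3)) ≤ 3*r*V^(2/3) * (c * (1/(c*2))^(2/3))
  have key : (r ^ 2 / (c * (r + 1))) ^ ((2:ℝ)/3) ≤ r * ((1:ℝ) ^ 2 / (c * (1 + 1))) ^ ((2:ℝ)/3) := by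
    have hs : Real.sqrt r ^ 2 = r := Real.sq_sqrt hr.le
    have hspos : 0 < Real.sqrt r := Real.sqrt_pos.mpr hr
    have hrw : r = (r ^ ((3:ℝ)/2)) ^ ((2:ℝ)/3) := by
      rw [← Real.rpow_mul hr.le]
      norm_num
    have h32 : r ^ ((3:ℝ)/2) = r * Real.sqrt r := by
      have : ((3:ℝ)/2) = 1 + 1/2 := by norm_num
      rw [this, Real.rpow_add hr, Real.rpow_one, Real.sqrt_eq_rpow]
    calc (r ^ 2 / (c * (r + 1))) ^ ((2:ℝ)/3)
        ≤ (r ^ ((3:ℝ)/2) * ((1:ℝ) ^ 2 / (c * (1 + 1)))) ^ ((2:ℝ)/3) := by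
          apply Real.rpow_le_rpow hb1.le _ (by norm_num)
          rw [h32, div_le_iff₀ (by positivity)]
          have key2 : r ^ 2 * 2 ≤ r * Real.sqrt r * (r + 1) := by
            nlinarith [mul_nonneg (mul_nonneg hspos.le (mul_nonneg hspos.le hspos.le))
              (sq_nonneg (Real.sqrt r - 1)), hs, hspos]
          calc r ^ 2 = r ^ 2 * 2 / 2 := by ring
            _ ≤ r * Real.sqrt r * (r + 1) / 2 := by linarith [div_le_div_of_nonneg_right (c := 2) key2 (by norm_num)]
            _ = r * Real.sqrt r * ((1:ℝ)^2 / (c * (1+1))) * (c * (r+1)) := by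
                field_simp; ring
      _ = r * ((1:ℝ) ^ 2 / (c * (1 + 1))) ^ ((2:ℝ)/3) := by
          rw [Real.mul_rpow (by positivity) hb2.le, ← hrw]
  calc 3 * 1 * V ^ ((2:ℝ)/3) * (c * (r ^ 2 / (c * (r + 1))) ^ ((2:ℝ)/3))
      = 3 * V ^ ((2:ℝ)/3) * c * ((r ^ 2 / (c * (r + 1))) ^ ((2:ℝ)/3)) := by ring
    _ ≤ 3 * V ^ ((2:ℝ)/3) * c * (r * ((1:ℝ) ^ 2 / (c * (1 + 1))) ^ ((2:ℝ)/3)) := by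
        apply mul_le_mul_of_nonneg_left key (by positivity)
    _ = 3 * r * V ^ ((2:ℝ)/3) * (c * ((1:ℝ) ^ 2 / (c * (1 + 1))) ^ ((2:ℝ)/3)) := by ring
end

section
/- Let α ∈ (0, π/2) and fix k > 0. The function r ↦ γ(r,k) = (2k + 2·r·k + r/cos α)/(r·k)^{2/3} on (0,∞) attains its unique minimum at r = 4·k·cos α/(2·k·cos α + 1); that is, γ(r,k) ≥ γ(4·k·cos α/(2·k·cos α + 1), k) for all r > 0 with equality only at that point. -/
open Real

lemma hip_aux (A B t t0 : ℝ) (hA : 0 < A) (hB : 0 < B) (ht : 0 < t) (ht0 : 0 < t0)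
    (h : B * t0 ^ 3 = 2 * A) :
    (A + B * t ^ 3) / t ^ 2 ≥ (A + B * t0 ^ 3) / t0 ^ 2 ∧
      ((A + B * t ^ 3) / t ^ 2 = (A + B * t0 ^ 3) / t0 ^ 2 → t = t0) := by
  have key : (A + B * t ^ 3) * t0 ^ 2 - (A + B * t0 ^ 3) * t ^ 2
      = (t - t0) ^ 2 * (B * t0 ^ 2) * (2 * t + t0) / 2 := by
    linear_combination ((t ^ 2 - t0 ^ 2) / 2) * h
  constructor
  · rw [ge_iff_le, div_le_div_iff₀ (by positivity) (by positivity)]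
    nlinarith [mul_nonneg (mul_nonneg (sq_nonneg (t - t0)) (by positivity : (0:ℝ) ≤ B * t0 ^ 2))
      (by positivity : (0:ℝ) ≤ 2 * t + t0)]
  · intro heq
    by_contra hne
    have hne' : t - t0 ≠ 0 := sub_ne_zero.mpr hne
    have h1 : (A + B * t ^ 3) * t0 ^ 2 = (A + B * t0 ^ 3) * t ^ 2 := by
      field_simp at heq
      linarith [heq]
    have h2 : 0 < (t - t0) ^ 2 * (B * t0 ^ 2) * (2 * t + t0) / 2 := by positivity
    linarith

/-- For `α ∈ (0, π/2)` and fixed `k > 0`, the function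
`r ↦ γ(r,k)` on `(0,∞)` attains its unique minimum at
`r = 4 k cos α / (2 k cos α + 1)`. -/
theorem hip_roof_fixed_k_optimal_r
    (α : ℝ) (hα : α ∈ Set.Ioo 0 (π / 2)) (k : ℝ) (hk : 0 < k) :
    ∀ r : ℝ, 0 < r →
      hipGamma α r k ≥
        hipGamma α (4 * k * Real.cos α / (2 * k * Real.cos α + 1)) k ∧
      (hipGamma α r k =
          hipGamma α (4 * k * Real.cos α / (2 * k * Real.cos α + 1)) k →
        r = 4 * k * Real.cos α / (2 * k * Real.cos α + 1)) := by
  intro r hr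
  have hc : 0 < Real.cos α :=
    Real.cos_pos_of_mem_Ioo ⟨by linarith [hα.1, Real.pi_pos], hα.2⟩
  set c := Real.cos α with hcdef
  set A : ℝ := 2 * k with hAdef
  set B : ℝ := 2 * k + 1 / c with hBdef
  have hA : 0 < A := by positivity
  have hB : 0 < B := by positivity
  set r0 : ℝ := 4 * k * c / (2 * k * c + 1) with hr0def
  have hr0 : 0 < r0 := by positivity
  have hBr0 : B * r0 = 2 * A := by
    rw [hBdef, hr0def, hAdef]
    field_simp
    ring
  set t : ℝ := r ^ ((1 : ℝ) / 3) with htdef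
  set t0 : ℝ := r0 ^ ((1 : ℝ) / 3) with ht0def
  have ht : 0 < t := Real.rpow_pos_of_pos hr _
  have ht0 : 0 < t0 := Real.rpow_pos_of_pos hr0 _
  have ht3 : t ^ 3 = r := by
    rw [htdef, ← Real.rpow_natCast (r ^ ((1:ℝ)/3)) 3, ← Real.rpow_mul hr.le]
    norm_num
  have ht03 : t0 ^ 3 = r0 := by
    rw [ht0def, ← Real.rpow_natCast (r0 ^ ((1:ℝ)/3)) 3, ← Real.rpow_mul hr0.le]
    norm_num
  have hK : 0 < k ^ ((2:ℝ)/3) := Real.rpow_pos_of_pos hk _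
  have hrew : ∀ s : ℝ, 0 < s → hipGamma α s k
      = ((A + B * (s ^ ((1:ℝ)/3)) ^ 3) / (s ^ ((1:ℝ)/3)) ^ 2) / k ^ ((2:ℝ)/3) := by
    intro s hs
    have hs3 : (s ^ ((1:ℝ)/3)) ^ 3 = s := by
      rw [← Real.rpow_natCast (s ^ ((1:ℝ)/3)) 3, ← Real.rpow_mul hs.le]
      norm_num
    have hden : (s * k) ^ ((2:ℝ)/3) = (s ^ ((1:ℝ)/3)) ^ 2 * k ^ ((2:ℝ)/3) := by
      rw [Real.mul_rpow hs.le hk.le]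
      congr 1
      rw [show ((2:ℝ)/3) = (1/3) * (2:ℕ) by norm_num, Real.rpow_mul hs.le,
        Real.rpow_natCast]
    have hnum : 2 * k + 2 * s * k + s / c = A + B * s := by
      rw [hAdef, hBdef]; field_simp; ring
    rw [hipGamma, hnum, hden, hs3, ← hs3]
    rw [div_div]
  have hB3 : B * t0 ^ 3 = 2 * A := by rw [ht03]; exact hBr0
  obtain ⟨hge, heqc⟩ := hip_aux A B t t0 hA hB ht ht0 hB3
  rw [hrew r hr, hrew r0 hr0]
  constructor
  · exact div_le_div_of_nonneg_right hge hK.le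
  · intro h
    have h' : (A + B * t ^ 3) / t ^ 2 = (A + B * t0 ^ 3) / t0 ^ 2 := by
      have h2 := congrArg (· * k ^ ((2:ℝ)/3)) h
      simpa [div_mul_cancel₀, hK.ne', htdef, ht0def, one_div] using h2
    have := heqc h'
    calc r = t ^ 3 := ht3.symm
    _ = t0 ^ 3 := by rw [this]
    _ = r0 := ht03
end

section
/- Let α ∈ (0, π/2), V > 0 and k > 0. Then the minimal external surface over all hip roof houses of volume V and slenderness aspect ratio k, namely V^{2/3}·γ(4·k·cos α/(2·k·cos α + 1), k), equals 6·k·V^{2/3}·( (2·k·cos α + 1)/(4·k²·cos α) )^{2/3}. -/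
open Real

/-- For `α ∈ (0, π/2)`, `V > 0` and `k > 0`, the minimal external
surface over all hip roof houses of volume `V` and slenderness aspect ratio `k`,
namely `V^{2/3} γ(4 k cos α/(2 k cos α + 1), k)`, equals
`6 k V^{2/3} ((2 k cos α + 1)/(4 k² cos α))^{2/3}`. -/
theorem hip_roof_min_surface_fixed_k
    (α V k : ℝ) (hα : α ∈ Set.Ioo 0 (π / 2)) (hV : 0 < V) (hk : 0 < k) :
    V ^ ((2 : ℝ) / 3) *
        hipGamma α (4 * k * Real.cos α / (2 * k * Real.cos α + 1)) k =
      6 * k * V ^ ((2 : ℝ) / 3) *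
        ((2 * k * Real.cos α + 1) / (4 * k ^ 2 * Real.cos α)) ^ ((2 : ℝ) / 3) := by
  obtain ⟨hα0, hα1⟩ := hα
  have hc : 0 < Real.cos α := Real.cos_pos_of_mem_Ioo ⟨by linarith [Real.pi_pos], hα1⟩
  set c := Real.cos α with hcc
  have hd : 0 < 2 * k * c + 1 := by positivity
  have hr : 4 * k * c / (2 * k * c + 1) * k = 4 * k ^ 2 * c / (2 * k * c + 1) := by
    field_simp
  have hnum : 2 * k + 2 * (4 * k * c / (2 * k * c + 1)) * k
      + 4 * k * c / (2 * k * c + 1) / c = 6 * k := by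
    field_simp; ring
  have hinv : ((2 * k * c + 1) / (4 * k ^ 2 * c)) ^ ((2 : ℝ) / 3)
      = ((4 * k ^ 2 * c / (2 * k * c + 1)) ^ ((2 : ℝ) / 3))⁻¹ := by
    rw [← Real.inv_rpow (by positivity), inv_div]
  have hpow : 0 < (4 * k ^ 2 * c / (2 * k * c + 1)) ^ ((2 : ℝ) / 3) := by positivity
  rw [hipGamma, hr, hnum, hinv]
  field_simp
end

section
/- Let α ∈ (0, π/2) and V > 0. The function k ↦ 6·k·V^{2/3}·( (2·k·cos α + 1)/(4·k²·cos α) )^{2/3}, giving the minimal external surface of a hip roof house of volume V with fixed slenderness aspect ratio k, attains its minimum on (0,∞) at k = 1/(2·cos α). -/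
open Real

/-- For `α ∈ (0, π/2)` and `V > 0`, the minimal external surface
`S_min(k) = 6 k V^{2/3} ((2 k cos α + 1)/(4 k² cos α))^{2/3}` of a hip roof house of
volume `V` with fixed slenderness aspect ratio `k` attains its minimum on `(0,∞)` at
`k = 1/(2 cos α)`. -/
theorem hip_roof_Smin_fixed_k_min_at_half_sec
    (α V : ℝ) (hα : α ∈ Set.Ioo 0 (π / 2)) (hV : 0 < V) :
    ∀ k : ℝ, 0 < k →
      6 * k * V ^ ((2 : ℝ) / 3) *
          ((2 * k * Real.cos α + 1) / (4 * k ^ 2 * Real.cos α)) ^ ((2 : ℝ) / 3) ≥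
        6 * (1 / (2 * Real.cos α)) * V ^ ((2 : ℝ) / 3) *
          ((2 * (1 / (2 * Real.cos α)) * Real.cos α + 1) /
              (4 * (1 / (2 * Real.cos α)) ^ 2 * Real.cos α)) ^ ((2 : ℝ) / 3) := by
  intro k hk
  have hc : 0 < Real.cos α :=
    Real.cos_pos_of_mem_Ioo ⟨by linarith [hα.1, Real.pi_pos], hα.2⟩
  set c := Real.cos α with hcdef
  set k0 : ℝ := 1 / (2 * c) with hk0def
  have hk0 : 0 < k0 := by positivity
  set X : ℝ := (2 * k * c + 1) / (4 * k ^ 2 * c) with hXdef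
  set Y : ℝ := (2 * k0 * c + 1) / (4 * k0 ^ 2 * c) with hYdef
  have hX : 0 < X := by positivity
  have hY : 0 < Y := by positivity
  have h32 : ∀ x : ℝ, 0 < x → (x ^ ((3:ℝ)/2)) ^ ((2:ℝ)/3) = x := by
    intro x hx
    rw [← Real.rpow_mul hx.le]
    norm_num
  have hsq : ∀ x : ℝ, 0 < x → (x ^ ((3:ℝ)/2)) ^ (2:ℕ) = x ^ (3:ℕ) := by
    intro x hx
    rw [← Real.rpow_natCast (x ^ ((3:ℝ)/2)) 2, ← Real.rpow_mul hx.le,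
      ← Real.rpow_natCast x 3]
    norm_num
  have hYval : Y = 2 * c := by
    rw [hYdef, hk0def]
    field_simp
    ring
  -- key polynomial inequality
  have hkey : k0 ^ (3:ℕ) * Y ^ (2:ℕ) ≤ k ^ (3:ℕ) * X ^ (2:ℕ) := by
    rw [hYval, hXdef, hk0def, div_pow, div_pow, ← mul_div_assoc,
      div_mul_eq_mul_div, div_le_div_iff₀ (by positivity) (by positivity)]
    nlinarith [mul_nonneg (by positivity : (0:ℝ) ≤ 8 * k ^ 3 * c ^ 3)
      (sq_nonneg (2 * k * c - 1))]
  have hA : 0 < k ^ ((3:ℝ)/2) * X := by positivity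
  have hB : 0 < k0 ^ ((3:ℝ)/2) * Y := by positivity
  have hBA : k0 ^ ((3:ℝ)/2) * Y ≤ k ^ ((3:ℝ)/2) * X := by
    have h2 : (k0 ^ ((3:ℝ)/2) * Y) ^ (2:ℕ) ≤ (k ^ ((3:ℝ)/2) * X) ^ (2:ℕ) := by
      rw [mul_pow, mul_pow, hsq k hk, hsq k0 hk0]
      exact hkey
    exact (pow_le_pow_iff_left₀ hB.le hA.le (by norm_num)).mp h2
  have hrp : (k0 ^ ((3:ℝ)/2) * Y) ^ ((2:ℝ)/3) ≤ (k ^ ((3:ℝ)/2) * X) ^ ((2:ℝ)/3) :=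
    Real.rpow_le_rpow hB.le hBA (by norm_num)
  rw [Real.mul_rpow (by positivity) hX.le, Real.mul_rpow (by positivity) hY.le,
    h32 k hk, h32 k0 hk0] at hrp
  have hfin := mul_le_mul_of_nonneg_left hrp
    (show (0:ℝ) ≤ 6 * V ^ ((2:ℝ)/3) by positivity)
  linarith [hfin]
end

section
/- Let V > 0, α ∈ (0, π/2), and 0 < a < b, and suppose the critical height H_crit = (V/(4·cos²α))^{1/3} satisfies H_crit ≥ b. Then the function S(W,H) = 2·W·H + 2·V/W + V/(H·cos α) over W > 0 and H ∈ [a,b] attains its minimum at W* = √(V/b) and H* = b; that is, S(W,H) ≥ 4·√(V·b) + V/(b·cos α) for all W > 0 and H ∈ [a,b]. -/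
open Real

/-- Constrained-height scenario, upper-bound-active case: if the
critical height `H_crit = (V/(4 cos² α))^{1/3}` satisfies `H_crit ≥ b`, then
`S(W,H) = 2WH + 2V/W + V/(H cos α)` over `W > 0`, `H ∈ [a,b]` is minimized at
`W* = √(V/b)`, `H* = b`, i.e. `S(W,H) ≥ 4√(V b) + V/(b cos α)`. -/
theorem hip_roof_constrained_height_upper_active
    (V α a b : ℝ) (hV : 0 < V) (hα : α ∈ Set.Ioo 0 (π / 2))
    (ha : 0 < a) (hab : a < b)
    (hcrit : (V / (4 * (Real.cos α) ^ 2)) ^ ((1 : ℝ) / 3) ≥ b) :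
    ∀ W H : ℝ, 0 < W → H ∈ Set.Icc a b →
      2 * W * H + 2 * V / W + V / (H * Real.cos α) ≥
        4 * Real.sqrt (V * b) + V / (b * Real.cos α) := by
  intro W H hW hH
  obtain ⟨hHa, hHb⟩ := hH
  have hb : 0 < b := lt_trans ha hab
  have hH0 : 0 < H := lt_of_lt_of_le ha hHa
  have hc : 0 < Real.cos α := by
    apply Real.cos_pos_of_mem_Ioo
    constructor
    · linarith [hα.1, Real.pi_pos]
    · exact hα.2
  set c := Real.cos α with hcdef
  clear_value c
  set sV := Real.sqrt V with hsVdef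
  set sH := Real.sqrt H with hsHdef
  set sb := Real.sqrt b with hsbdef
  clear_value sV sH sb
  have hsV2 : sV ^ 2 = V := by rw [hsVdef]; exact Real.sq_sqrt hV.le
  have hsH2 : sH ^ 2 = H := by rw [hsHdef]; exact Real.sq_sqrt hH0.le
  have hsb2 : sb ^ 2 = b := by rw [hsbdef]; exact Real.sq_sqrt hb.le
  have hsVpos : 0 < sV := by rw [hsVdef]; exact Real.sqrt_pos.2 hV
  have hsHpos : 0 < sH := by rw [hsHdef]; exact Real.sqrt_pos.2 hH0
  have hsbpos : 0 < sb := by rw [hsbdef]; exact Real.sqrt_pos.2 hb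
  have hsHsb : sH ≤ sb := by rw [hsHdef, hsbdef]; exact Real.sqrt_le_sqrt hHb
  -- cube the critical-height hypothesis: 4 c^2 b^3 ≤ V
  have hx : (0:ℝ) ≤ V / (4 * c ^ 2) := by positivity
  set t := (V / (4 * c ^ 2)) ^ ((1:ℝ)/3) with htdef
  clear_value t
  have ht3 : t ^ (3:ℕ) = V / (4 * c ^ 2) := by
    rw [htdef, ← Real.rpow_natCast ((V / (4 * c ^ 2)) ^ ((1:ℝ)/3)) 3,
      ← Real.rpow_mul hx]
    norm_num
  have hb3 : 4 * c ^ 2 * b ^ 3 ≤ V := by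
    have hbt : b ^ (3:ℕ) ≤ t ^ (3:ℕ) := pow_le_pow_left₀ hb.le hcrit 3
    rw [ht3] at hbt
    have h4c : 0 < 4 * c ^ 2 := by positivity
    calc 4 * c ^ 2 * b ^ 3 ≤ 4 * c ^ 2 * (V / (4 * c ^ 2)) := by
          exact mul_le_mul_of_nonneg_left hbt h4c.le
      _ = V := by field_simp
  -- 2 c sb^3 ≤ sV
  have hsb6 : sb ^ 6 = b ^ 3 := by rw [← hsb2]; ring
  have hu : (0:ℝ) < 2 * c * sb ^ 3 := by positivity
  have h6 : (2 * c * sb ^ 3) ^ 2 ≤ sV ^ 2 := by nlinarith [hb3, hsb6, hsV2]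
  have hkey : 2 * c * sb ^ 3 ≤ sV :=
    (pow_le_pow_iff_left₀ hu.le hsVpos.le two_ne_zero).mp h6
  -- AM-GM step
  have L1 : 2 * W * H + 2 * V / W ≥ 4 * (sV * sH) := by
    rw [ge_iff_le, ← sub_nonneg]
    have heq : 2 * W * H + 2 * V / W - 4 * (sV * sH)
        = (2 * H * W ^ 2 - 4 * (sV * sH) * W + 2 * V) / W := by
      field_simp; ring
    rw [heq]
    apply div_nonneg _ hW.le
    nlinarith [sq_nonneg (H * W - sV * sH), hH0, hsH2, hsV2]
  -- monotonicity step
  have h2 : 4 * c * sH ^ 2 * sb ^ 2 ≤ sV * (sb + sH) := by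
    have step1 : (2 * c * sb ^ 3) * (sb + sH) ≤ sV * (sb + sH) :=
      mul_le_mul_of_nonneg_right hkey (by positivity)
    have step2 : 0 ≤ 2 * c * sb ^ 2 * ((sb - sH) * (sb + 2 * sH)) :=
      mul_nonneg (by positivity)
        (mul_nonneg (sub_nonneg.2 hsHsb) (by positivity))
    nlinarith [step1, step2]
  have L2 : 4 * (sV * sH) + V / (H * c) ≥ 4 * (sV * sb) + V / (b * c) := by
    rw [ge_iff_le, ← sub_nonneg]
    have heq : 4 * (sV * sH) + V / (H * c) - (4 * (sV * sb) + V / (b * c))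
        = (4 * sV * (sH - sb) * (H * b * c) + V * (b - H)) / (H * b * c) := by
      field_simp; ring
    rw [heq]
    apply div_nonneg _ (by positivity)
    have hprod : 0 ≤ sV * (sb - sH) * (sV * (sb + sH) - 4 * c * sH ^ 2 * sb ^ 2) :=
      mul_nonneg (mul_nonneg hsVpos.le (sub_nonneg.2 hsHsb)) (sub_nonneg.2 h2)
    have hid : 4 * sV * (sH - sb) * (H * b * c) + V * (b - H)
        = sV * (sb - sH) * (sV * (sb + sH) - 4 * c * sH ^ 2 * sb ^ 2) := by
      rw [← hsV2, ← hsH2, ← hsb2]; ring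
    rw [hid]; exact hprod
  have hsqrtVb : Real.sqrt (V * b) = sV * sb := by
    rw [hsVdef, hsbdef]; exact Real.sqrt_mul hV.le b
  rw [hsqrtVb]
  linarith [L1, L2]
end
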